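/- arXiv:2602.07285 — 4 statements merged into one kernel-verified Lean document; each statement's English description precedes it below -/
import Mathlib

section
/- Let 0 < μ < 1 and define k* := min{k : μ_k ≥ μ}. The classifier R* based on S given by the selection rule P(R*=1 | S=s_i) = 1 for i < k*, P(R*=1 | S=s_{k*}) = (μ − μ_{k*−1})/P(S=s_{k*}), and P(R*=1 | S=s_i) = 0 for i > k*, satisfies P(R*=1) = μ, PPV(R*) = p*(μ) and FOR(R*) = q*(μ); that is, among all nonconstant classifiers based on S with selection rate μ, R* simultaneously maximizes the positive predictive value and minimizes the false omission rate. -/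
open Finset

/-!
Single-group setting.  A finite probability space `(Ω, P)`, a binary target `Y` with
base rate `π := P(Y = 1)`, and a calibrated score `S` taking `m > 1` distinct values
`1 ≥ s_1 > ⋯ > s_m ≥ 0` (here 0-indexed: `s i` is the paper's `s_{i+1}`), each with
positive probability `w i = P(S = s i)`, are—via calibration
`P(Y = 1 ∣ S = s i) = s i`—completely described, for the purposes of classifiers
based on `S`, by the data below.  A (possibly randomized) binary classifier `R`
based on `S` (i.e. `P(R = 1 ∣ S, Y) = P(R = 1 ∣ S)`) is in turn determined by its
selection rule `t i = P(R = 1 ∣ S = s i)`, with `P(R = 1) = ∑ i, w i * t i`,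
`P(Y = 1, R = 1) = ∑ i, s i * w i * t i`, `PPV(R) = P(Y = 1 ∣ R = 1)` and
`FOR(R) = P(Y = 1 ∣ R = 0)` as given below.
-/
structure CalibScore where
  m : ℕ
  s : ℕ → ℝ
  w : ℕ → ℝ
  one_lt_m : 1 < m
  s_nonneg : ∀ i, i < m → 0 ≤ s i
  s_le_one : ∀ i, i < m → s i ≤ 1
  s_desc : ∀ i j, i < j → j < m → s j < s i
  w_pos : ∀ i, i < m → 0 < w i
  w_sum : ∑ i ∈ Finset.range m, w i = 1

namespace CalibScore

/-- Base rate `π = P(Y = 1) = E[S]` (by calibration). -/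
noncomputable def pi (D : CalibScore) : ℝ := ∑ i ∈ Finset.range D.m, D.s i * D.w i

/-- `t` is a selection rule (`t i = P(R = 1 ∣ S = s i)` for a classifier `R` based on `S`). -/
def IsSelRule (D : CalibScore) (t : ℕ → ℝ) : Prop := ∀ i, i < D.m → 0 ≤ t i ∧ t i ≤ 1

/-- Selection rate `μ = P(R = 1)`. -/
noncomputable def selRate (D : CalibScore) (t : ℕ → ℝ) : ℝ :=
  ∑ i ∈ Finset.range D.m, D.w i * t i

/-- `P(Y = 1, R = 1) = ∑ i, s i * P(S = s i) * P(R = 1 ∣ S = s i)` (by calibration). -/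
noncomputable def posSel (D : CalibScore) (t : ℕ → ℝ) : ℝ :=
  ∑ i ∈ Finset.range D.m, D.s i * D.w i * t i

/-- `PPV(R) = P(Y = 1 ∣ R = 1)`. -/
noncomputable def ppv (D : CalibScore) (t : ℕ → ℝ) : ℝ := D.posSel t / D.selRate t

/-- `FOR(R) = P(Y = 1 ∣ R = 0)`. -/
noncomputable def forr (D : CalibScore) (t : ℕ → ℝ) : ℝ :=
  (D.pi - D.posSel t) / (1 - D.selRate t)

/-- `(p, q)` is feasible with selection rate `μ`: attained by a nonconstant
classifier based on `S` with `P(R = 1) = μ`. -/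
def FeasibleWith (D : CalibScore) (μ p q : ℝ) : Prop :=
  0 < μ ∧ μ < 1 ∧ ∃ t, D.IsSelRule t ∧ D.selRate t = μ ∧ D.ppv t = p ∧ D.forr t = q

/-- The feasible region `C`. -/
def Feasible (D : CalibScore) (p q : ℝ) : Prop := ∃ μ, D.FeasibleWith μ p q

/-- `μ_k = ∑_{i ≤ k} P(S = s_i)` (1-based `k`; `μ_0 = 0`). -/
noncomputable def muk (D : CalibScore) (k : ℕ) : ℝ := ∑ i ∈ Finset.range k, D.w i

/-- `c_k = ∑_{i < k} P(S = s_i) (s_i − s_k)` (1-based `k`). -/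
noncomputable def ck (D : CalibScore) (k : ℕ) : ℝ :=
  ∑ i ∈ Finset.range (k - 1), D.w i * (D.s i - D.s (k - 1))

/-- `I_k = (μ_{k−1}, μ_k] ∩ (0, 1)` (1-based `k`). -/
def Ik (D : CalibScore) (k : ℕ) : Set ℝ :=
  Set.Ioc (D.muk (k - 1)) (D.muk k) ∩ Set.Ioo 0 1

/-- `p*(μ)`: the supremum of `p` over pairs `(p, q)` feasible with `μ` having `q ≤ π ≤ p`. -/
noncomputable def pStar (D : CalibScore) (μ : ℝ) : ℝ :=
  sSup {p | ∃ q, D.FeasibleWith μ p q ∧ q ≤ D.pi ∧ D.pi ≤ p}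

/-- `q*(μ)`: the infimum of `q` over pairs `(p, q)` feasible with `μ` having `q ≤ π ≤ p`. -/
noncomputable def qStar (D : CalibScore) (μ : ℝ) : ℝ :=
  sInf {q | ∃ p, D.FeasibleWith μ p q ∧ q ≤ D.pi ∧ D.pi ≤ p}

/-- `p_k = s_k + c_k / μ_k` (1-based `k`), the breakpoint values of the boundary. -/
noncomputable def pkF (D : CalibScore) (k : ℕ) : ℝ := D.s (k - 1) + D.ck k / D.muk k

/-- The boundary formula `q(p) = ((π − c_k) p − s_k π) / (p − s_k − c_k)` on `J_k`
(1-based `k`). -/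
noncomputable def qF (D : CalibScore) (k : ℕ) (p : ℝ) : ℝ :=
  ((D.pi - D.ck k) * p - D.s (k - 1) * D.pi) / (p - D.s (k - 1) - D.ck k)

end CalibScore

/-!
At a fixed selection rate `μ`, `PPV = P(Y = 1, R = 1) / μ` and
`FOR = (π - P(Y = 1, R = 1)) / (1 - μ)`, so both are optimized by maximizing
`P(Y = 1, R = 1) = ∑ s_i w_i t_i` subject to `∑ w_i t_i = μ`. This is a fractional knapsack
problem, solved by filling the highest scores first, i.e. by the threshold rule `R*`.
Comparing `R*` with the constant rule `t ≡ μ` shows `FOR(R*) ≤ π ≤ PPV(R*)`, so `R*` lies in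
the sets defining `p*(μ)` and `q*(μ)` and attains both.
-/

namespace CalibScore

variable (D : CalibScore)

def thresholdRule (k : ℕ) (f : ℝ) : ℕ → ℝ := fun i => if i < k then 1 else if i = k then f else 0

lemma muk_succ (k : ℕ) : D.muk (k + 1) = D.muk k + D.w k :=
  Finset.sum_range_succ _ _

lemma isSelRule_const {a : ℝ} (h0 : 0 ≤ a) (h1 : a ≤ 1) : D.IsSelRule fun _ => a :=
  fun _ _ => ⟨h0, h1⟩

lemma selRate_const (a : ℝ) : D.selRate (fun _ => a) = a := by
  rw [selRate, ← Finset.sum_mul, D.w_sum, one_mul]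

lemma posSel_const (a : ℝ) : D.posSel (fun _ => a) = a * D.pi := by
  rw [posSel, pi, Finset.mul_sum]
  exact Finset.sum_congr rfl fun _ _ => by ring

lemma isSelRule_thresholdRule (k : ℕ) {f : ℝ} (h0 : 0 ≤ f) (h1 : f ≤ 1) :
    D.IsSelRule (thresholdRule k f) := by
  intro i _
  unfold thresholdRule
  split_ifs <;> constructor <;> linarith

lemma selRate_thresholdRule {k : ℕ} (hk : k < D.m) (f : ℝ) :
    D.selRate (thresholdRule k f) = D.muk k + D.w k * f := by
  have hzero : ∀ i ∈ Finset.range D.m, i ∉ Finset.range (k + 1) →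
      D.w i * thresholdRule k f i = 0 := fun i _ hi => by
    simp only [Finset.mem_range] at hi
    simp [thresholdRule, show ¬i < k by omega, show i ≠ k by omega]
  rw [selRate, ← Finset.sum_subset (Finset.range_subset_range.2 hk) hzero,
    Finset.sum_range_succ, muk]
  congr 1
  · exact Finset.sum_congr rfl fun i hi => by
      simp [thresholdRule, Finset.mem_range.1 hi]
  · simp [thresholdRule]

/-- Moving selection mass from scores below `c` to scores above `c` at a fixed selection rate
can only increase `P(Y = 1, R = 1)`. -/
lemma posSel_le_of_exchange {t u : ℕ → ℝ} (c : ℝ) (hsel : D.selRate u = D.selRate t)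
    (h : ∀ i < D.m, 0 ≤ (D.s i - c) * (D.w i * (t i - u i))) : D.posSel u ≤ D.posSel t := by
  have hsum : ∑ i ∈ Finset.range D.m, (D.s i - c) * (D.w i * (t i - u i))
      = (D.posSel t - D.posSel u) - c * (D.selRate t - D.selRate u) := by
    simp only [posSel, selRate, ← Finset.sum_sub_distrib, Finset.mul_sum]
    exact Finset.sum_congr rfl fun i _ => by ring
  have hnonneg := Finset.sum_nonneg fun i hi => h i (Finset.mem_range.1 hi)
  rw [hsum, hsel, sub_self, mul_zero, sub_zero] at hnonneg
  linarith

lemma posSel_le_posSel_thresholdRule {k : ℕ} (hk : k < D.m) (f : ℝ) {u : ℕ → ℝ}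
    (hu : D.IsSelRule u) (hsel : D.selRate u = D.selRate (thresholdRule k f)) :
    D.posSel u ≤ D.posSel (thresholdRule k f) := by
  refine D.posSel_le_of_exchange (D.s k) hsel fun i hi => ?_
  have hw := (D.w_pos i hi).le
  obtain ⟨hu0, hu1⟩ := hu i hi
  rcases lt_trichotomy i k with hik | rfl | hki
  · have hs := D.s_desc i k hik hk
    simp only [thresholdRule, if_pos hik]
    exact mul_nonneg (by linarith) (mul_nonneg hw (by linarith))
  · simp
  · have hs := D.s_desc k i hki hi
    simp only [thresholdRule, if_neg (show ¬i < k by omega), if_neg hki.ne', zero_sub]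
    exact mul_nonneg_of_nonpos_of_nonpos (by linarith) (by nlinarith)

def IsPosSelMax (μ : ℝ) (t : ℕ → ℝ) : Prop :=
  D.IsSelRule t ∧ D.selRate t = μ ∧
    ∀ u, D.IsSelRule u → D.selRate u = μ → D.posSel u ≤ D.posSel t

namespace IsPosSelMax

variable {D} {μ : ℝ} {t : ℕ → ℝ} (ht : D.IsPosSelMax μ t)
include ht

lemma ppv_le {p q : ℝ} (hpq : D.FeasibleWith μ p q) : p ≤ D.ppv t := by
  obtain ⟨hμ0, -, u, hu, hsel, rfl, -⟩ := hpq
  rw [ppv, ppv, hsel, ht.2.1]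
  exact div_le_div_of_nonneg_right (ht.2.2 u hu hsel) hμ0.le

lemma forr_le {p q : ℝ} (hpq : D.FeasibleWith μ p q) : D.forr t ≤ q := by
  obtain ⟨-, hμ1, u, hu, hsel, -, rfl⟩ := hpq
  rw [forr, forr, hsel, ht.2.1]
  exact div_le_div_of_nonneg_right (by linarith [ht.2.2 u hu hsel]) (by linarith)

lemma mul_pi_le_posSel (hμ0 : 0 ≤ μ) (hμ1 : μ ≤ 1) : μ * D.pi ≤ D.posSel t := by
  rw [← D.posSel_const]
  exact ht.2.2 _ (D.isSelRule_const hμ0 hμ1) (D.selRate_const μ)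

lemma pi_le_ppv (hμ0 : 0 < μ) (hμ1 : μ ≤ 1) : D.pi ≤ D.ppv t := by
  rw [ppv, ht.2.1, le_div_iff₀ hμ0, mul_comm]
  exact ht.mul_pi_le_posSel hμ0.le hμ1

lemma forr_le_pi (hμ0 : 0 ≤ μ) (hμ1 : μ < 1) : D.forr t ≤ D.pi := by
  rw [forr, ht.2.1, div_le_iff₀ (by linarith)]
  linarith [ht.mul_pi_le_posSel hμ0 hμ1.le]

lemma feasibleWith (hμ0 : 0 < μ) (hμ1 : μ < 1) : D.FeasibleWith μ (D.ppv t) (D.forr t) :=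
  ⟨hμ0, hμ1, t, ht.1, ht.2.1, rfl, rfl⟩

lemma ppv_eq_pStar (hμ0 : 0 < μ) (hμ1 : μ < 1) : D.ppv t = D.pStar μ := by
  refine (IsGreatest.csSup_eq ⟨?_, ?_⟩).symm
  · exact ⟨D.forr t, ht.feasibleWith hμ0 hμ1, ht.forr_le_pi hμ0.le hμ1, ht.pi_le_ppv hμ0 hμ1.le⟩
  · rintro _ ⟨_, hpq, -⟩
    exact ht.ppv_le hpq

lemma forr_eq_qStar (hμ0 : 0 < μ) (hμ1 : μ < 1) : D.forr t = D.qStar μ := by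
  refine (IsLeast.csInf_eq ⟨?_, ?_⟩).symm
  · exact ⟨D.ppv t, ht.feasibleWith hμ0 hμ1, ht.forr_le_pi hμ0.le hμ1, ht.pi_le_ppv hμ0 hμ1.le⟩
  · rintro _ ⟨_, hpq, -⟩
    exact ht.forr_le hpq

end IsPosSelMax

lemma isPosSelMax_thresholdRule {k : ℕ} (hk : k < D.m) {f : ℝ} (h0 : 0 ≤ f) (h1 : f ≤ 1) :
    D.IsPosSelMax (D.selRate (thresholdRule k f)) (thresholdRule k f) :=
  ⟨D.isSelRule_thresholdRule k h0 h1, rfl,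
    fun _ hu hsel => D.posSel_le_posSel_thresholdRule hk f hu hsel⟩

end CalibScore

/-- For `0 < μ < 1` and `k* = min {k ∣ μ_k ≥ μ}` (captured by `hge`
and `hmin`), the soft-thresholding classifier `R*` given by the displayed selection
rule has `P(R* = 1) = μ`, `PPV(R*) = p*(μ)` and `FOR(R*) = q*(μ)`; that is, among all
nonconstant classifiers based on `S` with selection rate `μ` (and `q ≤ π ≤ p`), it
simultaneously maximizes the PPV and minimizes the FOR. -/
theorem stmt0 (D : CalibScore) (μ : ℝ) (hμ0 : 0 < μ) (hμ1 : μ < 1)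
    (kst : ℕ) (hk1 : 1 ≤ kst) (hkm : kst ≤ D.m)
    (hge : μ ≤ D.muk kst)
    (hmin : ∀ j, j < kst → D.muk j < μ) :
    let tsel : ℕ → ℝ := fun i =>
      if i + 1 < kst then 1
      else if i + 1 = kst then (μ - D.muk (kst - 1)) / D.w (kst - 1)
      else 0
    D.IsSelRule tsel ∧ D.selRate tsel = μ ∧
      D.ppv tsel = D.pStar μ ∧ D.forr tsel = D.qStar μ ∧
      ∀ p q : ℝ, D.FeasibleWith μ p q → q ≤ D.pi → D.pi ≤ p →
        p ≤ D.ppv tsel ∧ D.forr tsel ≤ q := by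
  intro tsel
  obtain ⟨k, rfl⟩ : ∃ k, kst = k + 1 := ⟨kst - 1, by omega⟩
  set f := (μ - D.muk k) / D.w k with hf
  have htsel : tsel = CalibScore.thresholdRule k f := by
    funext i
    simp [tsel, CalibScore.thresholdRule, hf]
  have hk : k < D.m := by omega
  have hw := D.w_pos k hk
  have hlow := hmin k k.lt_succ_self
  rw [D.muk_succ] at hge
  have hf0 : 0 ≤ f := div_nonneg (by linarith) hw.le
  have hf1 : f ≤ 1 := (div_le_one hw).2 (by linarith)
  have hsel : D.selRate tsel = μ := by
    rw [htsel, D.selRate_thresholdRule hk, hf]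
    field_simp
    ring
  have hmax : D.IsPosSelMax μ tsel := hsel ▸ htsel ▸ D.isPosSelMax_thresholdRule hk hf0 hf1
  exact ⟨hmax.1, hsel, hmax.ppv_eq_pStar hμ0 hμ1, hmax.forr_eq_qStar hμ0 hμ1,
    fun p q hpq _ _ => ⟨hmax.ppv_le hpq, hmax.forr_le hpq⟩⟩
end

section
/- For μ ∈ I_1 = (0, μ_1], the extremal boundary values satisfy p*(μ) = s_1 and q*(μ) = (π − μ s_1)/(1 − μ); moreover q*(μ) is strictly decreasing in μ on I_1, with limit π as μ → 0⁺ and value q_1 := (π − P(S=s_1)·s_1)/(1 − P(S=s_1)) < π at μ = μ_1. -/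
open Finset

/-!
Every selection rule satisfies `P(Y = 1, R = 1) ≤ s_1 P(R = 1)`, so `PPV ≤ s_1` and
`FOR ≥ (π − μ s_1)/(1 − μ)`. For `μ ≤ P(S = s_1)` both bounds are attained at once by the
rule that selects only among the top score, with probability `μ / P(S = s_1)`. The
resulting `q*(μ) = s_1 + (π − s_1)/(1 − μ)` is strictly decreasing because `π < s_1`.
-/

lemma strictAntiOn_sub_mul_div_one_sub {a b : ℝ} (hab : a < b) :
    StrictAntiOn (fun x => (a - x * b) / (1 - x)) (Set.Iio 1) := by
  intro x hx y hy hxy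
  have hx1 : 0 < 1 - x := sub_pos.mpr hx
  have hy1 : 0 < 1 - y := sub_pos.mpr hy
  dsimp only
  rw [div_lt_div_iff₀ hy1 hx1]
  nlinarith [mul_pos (sub_pos.mpr hxy) (sub_pos.mpr hab)]

namespace CalibScore

variable (D : CalibScore)

lemma zero_lt_m : 0 < D.m := zero_lt_one.trans D.one_lt_m

lemma s_le_s_zero {i : ℕ} (hi : i < D.m) : D.s i ≤ D.s 0 := by
  rcases Nat.eq_zero_or_pos i with rfl | h
  · exact le_rfl
  · exact (D.s_desc 0 i h hi).le

lemma w_zero_pos : 0 < D.w 0 := D.w_pos 0 D.zero_lt_m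

lemma w_zero_lt_one : D.w 0 < 1 := by
  rw [← D.w_sum]
  exact Finset.single_lt_sum one_ne_zero (mem_range.mpr D.zero_lt_m)
    (mem_range.mpr D.one_lt_m) (D.w_pos 1 D.one_lt_m)
    fun k hk _ => (D.w_pos k (mem_range.mp hk)).le

lemma muk_one : D.muk 1 = D.w 0 := by
  simp [muk]

lemma pi_lt_s_zero : D.pi < D.s 0 := by
  calc D.pi < ∑ i ∈ range D.m, D.s 0 * D.w i := by
        refine Finset.sum_lt_sum (fun i hi => ?_) ⟨1, mem_range.mpr D.one_lt_m, ?_⟩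
        · have hi := mem_range.mp hi
          exact mul_le_mul_of_nonneg_right (D.s_le_s_zero hi) (D.w_pos i hi).le
        · exact mul_lt_mul_of_pos_right (D.s_desc 0 1 one_pos D.one_lt_m)
            (D.w_pos 1 D.one_lt_m)
    _ = D.s 0 := by rw [← Finset.mul_sum, D.w_sum, mul_one]

lemma posSel_le_mul_selRate {t : ℕ → ℝ} (ht : D.IsSelRule t) :
    D.posSel t ≤ D.s 0 * D.selRate t := by
  rw [posSel, selRate, Finset.mul_sum]
  refine Finset.sum_le_sum fun i hi => ?_
  have hi := mem_range.mp hi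
  have hwt : 0 ≤ D.w i * t i := mul_nonneg (D.w_pos i hi).le (ht i hi).1
  nlinarith [D.s_le_s_zero hi]

/-- The FOR of a classifier with selection rate `μ` whose selected individuals all have the
top score `s_1`. -/
noncomputable def topFor (μ : ℝ) : ℝ := (D.pi - μ * D.s 0) / (1 - μ)

lemma strictAntiOn_topFor : StrictAntiOn D.topFor (Set.Iio 1) :=
  strictAntiOn_sub_mul_div_one_sub D.pi_lt_s_zero

lemma topFor_zero : D.topFor 0 = D.pi := by
  simp [topFor]

lemma topFor_lt_pi {μ : ℝ} (h0 : 0 < μ) (h1 : μ < 1) : D.topFor μ < D.pi :=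
  D.topFor_zero ▸ D.strictAntiOn_topFor (show (0 : ℝ) < 1 from one_pos) h1 h0

lemma tendsto_topFor_nhdsGT_zero :
    Filter.Tendsto D.topFor (nhdsWithin 0 (Set.Ioi 0)) (nhds D.pi) := by
  have hcont : ContinuousAt D.topFor 0 :=
    ContinuousAt.div (by fun_prop) (by fun_prop) (by norm_num)
  exact D.topFor_zero ▸ hcont.tendsto.mono_left nhdsWithin_le_nhds

noncomputable def topSelRule (μ : ℝ) : ℕ → ℝ := fun i => if i = 0 then μ / D.w 0 else 0

lemma isSelRule_topSelRule {μ : ℝ} (hμ : μ ∈ Set.Icc 0 (D.w 0)) :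
    D.IsSelRule (D.topSelRule μ) := by
  intro i _
  by_cases h : i = 0
  · simp only [topSelRule, if_pos h]
    exact ⟨div_nonneg hμ.1 D.w_zero_pos.le, (div_le_one D.w_zero_pos).mpr hμ.2⟩
  · simp [topSelRule, h]

lemma sum_mul_topSelRule (f : ℕ → ℝ) (μ : ℝ) :
    ∑ i ∈ range D.m, f i * D.w i * D.topSelRule μ i = f 0 * μ := by
  rw [Finset.sum_eq_single_of_mem 0 (mem_range.mpr D.zero_lt_m)
    fun i _ hi => by simp [topSelRule, hi]]
  simp only [topSelRule, if_true]
  field_simp [D.w_zero_pos.ne']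

lemma selRate_topSelRule (μ : ℝ) : D.selRate (D.topSelRule μ) = μ := by
  simpa [selRate] using D.sum_mul_topSelRule 1 μ

lemma posSel_topSelRule (μ : ℝ) : D.posSel (D.topSelRule μ) = D.s 0 * μ :=
  D.sum_mul_topSelRule D.s μ

lemma feasibleWith_topSelRule {μ : ℝ} (hμ : μ ∈ Set.Ioc 0 (D.w 0)) :
    D.FeasibleWith μ (D.s 0) (D.topFor μ) := by
  refine ⟨hμ.1, hμ.2.trans_lt D.w_zero_lt_one, D.topSelRule μ,
    D.isSelRule_topSelRule (Set.Ioc_subset_Icc_self hμ), D.selRate_topSelRule μ, ?_, ?_⟩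
  · rw [ppv, selRate_topSelRule, posSel_topSelRule, mul_div_assoc, div_self hμ.1.ne', mul_one]
  · rw [forr, selRate_topSelRule, posSel_topSelRule, topFor, mul_comm (D.s 0)]

variable {D}

lemma FeasibleWith.le_s_zero {μ p q : ℝ} (h : D.FeasibleWith μ p q) : p ≤ D.s 0 := by
  obtain ⟨hμ0, -, t, ht, rfl, rfl, -⟩ := h
  rw [ppv, div_le_iff₀ hμ0]
  exact D.posSel_le_mul_selRate ht

lemma FeasibleWith.topFor_le {μ p q : ℝ} (h : D.FeasibleWith μ p q) : D.topFor μ ≤ q := by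
  obtain ⟨-, hμ1, t, ht, rfl, -, rfl⟩ := h
  have h1 : 0 < 1 - D.selRate t := sub_pos.mpr hμ1
  rw [topFor, forr, div_le_div_iff_of_pos_right h1]
  linarith [D.posSel_le_mul_selRate ht]

variable (D)

lemma pStar_eq_s_zero {μ : ℝ} (hμ : μ ∈ Set.Ioc 0 (D.w 0)) : D.pStar μ = D.s 0 :=
  IsGreatest.csSup_eq ⟨⟨_, D.feasibleWith_topSelRule hμ,
    (D.topFor_lt_pi hμ.1 (hμ.2.trans_lt D.w_zero_lt_one)).le, D.pi_lt_s_zero.le⟩,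
    fun _ ⟨_, h, _⟩ => h.le_s_zero⟩

lemma qStar_eq_topFor {μ : ℝ} (hμ : μ ∈ Set.Ioc 0 (D.w 0)) : D.qStar μ = D.topFor μ :=
  IsLeast.csInf_eq ⟨⟨_, D.feasibleWith_topSelRule hμ,
    (D.topFor_lt_pi hμ.1 (hμ.2.trans_lt D.w_zero_lt_one)).le, D.pi_lt_s_zero.le⟩,
    fun _ ⟨_, h, _⟩ => h.topFor_le⟩

end CalibScore

/-- For `μ ∈ I_1 = (0, μ_1]`, `p*(μ) = s_1` and
`q*(μ) = (π − μ s_1)/(1 − μ)`; moreover `q*` is strictly decreasing on `I_1`,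
tends to `π` as `μ → 0⁺`, and at `μ = μ_1` equals
`q_1 = (π − P(S = s_1) s_1)/(1 − P(S = s_1)) < π`. -/
theorem stmt3 (D : CalibScore) :
    (∀ μ ∈ Set.Ioc (0 : ℝ) (D.muk 1),
      D.pStar μ = D.s 0 ∧ D.qStar μ = (D.pi - μ * D.s 0) / (1 - μ)) ∧
    StrictAntiOn D.qStar (Set.Ioc (0 : ℝ) (D.muk 1)) ∧
    Filter.Tendsto D.qStar (nhdsWithin 0 (Set.Ioi (0 : ℝ))) (nhds D.pi) ∧
    D.qStar (D.muk 1) = (D.pi - D.w 0 * D.s 0) / (1 - D.w 0) ∧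
    (D.pi - D.w 0 * D.s 0) / (1 - D.w 0) < D.pi := by
  rw [D.muk_one]
  have hq : Set.EqOn D.topFor D.qStar (Set.Ioc 0 (D.w 0)) :=
    fun μ hμ => (D.qStar_eq_topFor hμ).symm
  have hI : Set.Ioc 0 (D.w 0) ⊆ Set.Iio 1 :=
    fun μ hμ => hμ.2.trans_lt D.w_zero_lt_one
  refine ⟨fun μ hμ => ⟨D.pStar_eq_s_zero hμ, D.qStar_eq_topFor hμ⟩,
    (D.strictAntiOn_topFor.mono hI).congr hq, ?_,
    D.qStar_eq_topFor ⟨D.w_zero_pos, le_rfl⟩, D.topFor_lt_pi D.w_zero_pos D.w_zero_lt_one⟩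
  exact D.tendsto_topFor_nhdsGT_zero.congr'
    (hq.eventuallyEq_of_mem (Ioc_mem_nhdsGT D.w_zero_pos))
end

section
/- Let R be a nonconstant classifier based on S with selection rate μ := P(R=1), p := PPV(R) and q := FOR(R), and for η ∈ [0,1] define the classifier R^η by the selection rule P(R^η=1 | S=s_i) = η·P(R=1 | S=s_i) + (1−η)·μ. Then P(R^η=1) = μ, PPV(R^η) = η p + (1−η) π, and FOR(R^η) = η q + (1−η) π. -/
open Finset

/-!
The selection rate `∑ w t` and `P(Y = 1, R = 1) = ∑ s w t` are affine in the selection rule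
`t`, a constant rule `c` contributing `c` and `c π`. Mixing `R` with the constant rule at its
own selection rate `μ` therefore keeps the selection rate, so `PPV` and `FOR` of the mixture are
ratios over the unchanged denominators `μ` and `1 - μ`: they are the same convex combinations
of those of `R` and of the constant rule, whose `PPV` and `FOR` both equal `π`.
-/

namespace CalibScore

variable (D : CalibScore)

theorem selRate_affine (t : ℕ → ℝ) (a b : ℝ) :
    D.selRate (fun i => a * t i + b) = a * D.selRate t + b := by
  simp only [selRate, mul_add, sum_add_distrib, ← sum_mul, D.w_sum, one_mul, mul_sum]
  congr 1
  exact sum_congr rfl fun _ _ => by ring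

theorem posSel_affine (t : ℕ → ℝ) (a b : ℝ) :
    D.posSel (fun i => a * t i + b) = a * D.posSel t + b * D.pi := by
  simp only [posSel, pi, mul_add, sum_add_distrib, mul_sum]
  congr 1 <;> exact sum_congr rfl fun _ _ => by ring

theorem isSelRule_const_s5 {c : ℝ} (hc0 : 0 ≤ c) (hc1 : c ≤ 1) : D.IsSelRule fun _ => c :=
  fun _ _ => ⟨hc0, hc1⟩

variable {D}

theorem IsSelRule.convex_comb {t u : ℕ → ℝ} (ht : D.IsSelRule t) (hu : D.IsSelRule u)
    {η : ℝ} (hη0 : 0 ≤ η) (hη1 : η ≤ 1) : D.IsSelRule fun i => η * t i + (1 - η) * u i := by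
  intro i hi
  obtain ⟨ht0, ht1⟩ := ht i hi
  obtain ⟨hu0, hu1⟩ := hu i hi
  constructor <;> nlinarith

variable (D)

theorem selRate_mix_selRate (t : ℕ → ℝ) (η : ℝ) :
    D.selRate (fun i => η * t i + (1 - η) * D.selRate t) = D.selRate t := by
  rw [selRate_affine]
  ring

theorem ppv_mix_selRate {t : ℕ → ℝ} (hμ : D.selRate t ≠ 0) (η : ℝ) :
    D.ppv (fun i => η * t i + (1 - η) * D.selRate t) = η * D.ppv t + (1 - η) * D.pi := by
  rw [ppv, selRate_mix_selRate, posSel_affine, ppv]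
  field_simp

theorem forr_mix_selRate {t : ℕ → ℝ} (hμ : 1 - D.selRate t ≠ 0) (η : ℝ) :
    D.forr (fun i => η * t i + (1 - η) * D.selRate t) = η * D.forr t + (1 - η) * D.pi := by
  rw [forr, selRate_mix_selRate, posSel_affine, forr]
  field_simp
  ring

end CalibScore

/-- Let `R` be a nonconstant classifier based on `S`, given by the
selection rule `t` with selection rate `μ = P(R = 1)`, and for `η ∈ [0,1]` let `R^η`
be given by the selection rule `i ↦ η t i + (1 − η) μ` (the `η`-mixture of `R` with
an independent Bernoulli(`μ`)).  Then `P(R^η = 1) = μ`, `PPV(R^η) = η p + (1 − η) π`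
and `FOR(R^η) = η q + (1 − η) π`, where `p = PPV(R)` and `q = FOR(R)`. -/
theorem stmt5 (D : CalibScore) (t : ℕ → ℝ) (ht : D.IsSelRule t)
    (hμ0 : 0 < D.selRate t) (hμ1 : D.selRate t < 1)
    (η : ℝ) (hη : η ∈ Set.Icc (0 : ℝ) 1) :
    D.IsSelRule (fun i => η * t i + (1 - η) * D.selRate t) ∧
    D.selRate (fun i => η * t i + (1 - η) * D.selRate t) = D.selRate t ∧
    D.ppv (fun i => η * t i + (1 - η) * D.selRate t) = η * D.ppv t + (1 - η) * D.pi ∧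
    D.forr (fun i => η * t i + (1 - η) * D.selRate t) = η * D.forr t + (1 - η) * D.pi :=
  ⟨ht.convex_comb (D.isSelRule_const_s5 hμ0.le hμ1.le) hη.1 hη.2,
    D.selRate_mix_selRate t η,
    D.ppv_mix_selRate hμ0.ne' η,
    D.forr_mix_selRate (sub_ne_zero.mpr hμ1.ne') η⟩
end

section
/- For every k ∈ {1, …, m−1}, the minimal false omission rate at selection rate μ_k equals the conditional mean of the bottom scores: q_k := q*(μ_k) = (π − μ_k p_k)/(1 − μ_k) = (Σ_{i>k} s_i P(S=s_i)) / (Σ_{i>k} P(S=s_i)); in particular q_{m−1} = s_m. -/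
open Finset

/-!
At selection rate `μ_k` the threshold rule selecting exactly the top `k` scores is optimal:
moving selection mass from a score above `s_k` to one below it can only lower
`P(Y = 1, R = 1)` (a bathtub argument). Since `P(R = 1) = μ_k` is fixed, this rule maximizes
`PPV = P(Y = 1, R = 1) / μ_k` and minimizes `FOR = (π − P(Y = 1, R = 1)) / (1 − μ_k)`
simultaneously, and its `FOR` is the mean score of the bottom `m − k` values.
-/

namespace CalibScore

variable (D : CalibScore) {k : ℕ} {t : ℕ → ℝ}

def topRule (k : ℕ) : ℕ → ℝ := fun i => if i < k then 1 else 0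

theorem isSelRule_topRule : D.IsSelRule (topRule k) := by
  intro i _
  unfold topRule
  split_ifs <;> norm_num

theorem s_le_s_of_le {i j : ℕ} (hij : i ≤ j) (hj : j < D.m) : D.s j ≤ D.s i :=
  hij.eq_or_lt.elim (fun h => h ▸ le_rfl) fun h => (D.s_desc i j h hj).le

theorem muk_pos (hk1 : 1 ≤ k) (hkm : k ≤ D.m) : 0 < D.muk k :=
  Finset.sum_pos (fun i hi => D.w_pos i ((mem_range.mp hi).trans_le hkm))
    ⟨0, mem_range.mpr hk1⟩

theorem one_sub_muk (hkm : k ≤ D.m) : 1 - D.muk k = ∑ i ∈ Ico k D.m, D.w i := by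
  rw [← D.w_sum, muk, ← sum_range_add_sum_Ico _ hkm, add_sub_cancel_left]

theorem sum_Ico_w_pos (hkm : k < D.m) : 0 < ∑ i ∈ Ico k D.m, D.w i :=
  Finset.sum_pos (fun i hi => D.w_pos i (mem_Ico.mp hi).2) ⟨k, mem_Ico.mpr ⟨le_rfl, hkm⟩⟩

theorem pi_eq_selRate_mul_ppv_add (h0 : 0 < D.selRate t) (h1 : D.selRate t < 1) :
    D.pi = D.selRate t * D.ppv t + (1 - D.selRate t) * D.forr t := by
  have h1' : 1 - D.selRate t ≠ 0 := by linarith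
  rw [ppv, forr, mul_div_cancel₀ _ h0.ne', mul_div_cancel₀ _ h1']
  ring

theorem forr_eq_pi_sub_selRate_mul_ppv (h0 : D.selRate t ≠ 0) :
    D.forr t = (D.pi - D.selRate t * D.ppv t) / (1 - D.selRate t) := by
  rw [ppv, mul_div_cancel₀ _ h0, forr]

theorem forr_le_pi_and_pi_le_ppv (h0 : 0 < D.selRate t) (h1 : D.selRate t < 1)
    (hle : D.forr t ≤ D.ppv t) : D.forr t ≤ D.pi ∧ D.pi ≤ D.ppv t := by
  rw [D.pi_eq_selRate_mul_ppv_add h0 h1]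
  constructor <;> nlinarith

theorem posSel_sub_posSel (t' : ℕ → ℝ) (c : ℝ) :
    D.posSel t - D.posSel t' = c * (D.selRate t - D.selRate t') +
      ∑ i ∈ range D.m, (D.s i - c) * D.w i * (t i - t' i) := by
  simp only [posSel, selRate, ← sum_sub_distrib, mul_sum, ← sum_add_distrib]
  exact sum_congr rfl fun i _ => by ring

theorem sum_range_mul_topRule {n : ℕ} (f : ℕ → ℝ) (hkn : k ≤ n) :
    ∑ i ∈ range n, f i * topRule k i = ∑ i ∈ range k, f i := by
  rw [← sum_range_add_sum_Ico _ hkn]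
  have h_top : ∀ i ∈ range k, f i * topRule k i = f i := fun i hi => by
    simp [topRule, mem_range.mp hi]
  have h_bot : ∀ i ∈ Ico k n, f i * topRule k i = 0 := fun i hi => by
    simp [topRule, (mem_Ico.mp hi).1]
  rw [sum_congr rfl h_top, sum_eq_zero h_bot, add_zero]

theorem selRate_topRule (hkm : k ≤ D.m) : D.selRate (topRule k) = D.muk k :=
  sum_range_mul_topRule _ hkm

theorem posSel_topRule (hkm : k ≤ D.m) :
    D.posSel (topRule k) = ∑ i ∈ range k, D.s i * D.w i :=
  sum_range_mul_topRule _ hkm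

theorem ppv_topRule (hkm : k ≤ D.m) :
    D.ppv (topRule k) = (∑ i ∈ range k, D.s i * D.w i) / D.muk k := by
  rw [ppv, D.posSel_topRule hkm, D.selRate_topRule hkm]

theorem forr_topRule (hkm : k ≤ D.m) :
    D.forr (topRule k) = (∑ i ∈ Ico k D.m, D.s i * D.w i) / ∑ i ∈ Ico k D.m, D.w i := by
  rw [forr, D.posSel_topRule hkm, D.selRate_topRule hkm, D.one_sub_muk hkm, pi,
    ← sum_range_add_sum_Ico _ hkm, add_sub_cancel_left]

/-- The threshold score `s (k - 1)` separates the two conditional means. -/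
theorem forr_topRule_le_ppv_topRule (hk1 : 1 ≤ k) (hkm : k < D.m) :
    D.forr (topRule k) ≤ D.ppv (topRule k) := by
  rw [D.forr_topRule hkm.le, D.ppv_topRule hkm.le]
  calc (∑ i ∈ Ico k D.m, D.s i * D.w i) / ∑ i ∈ Ico k D.m, D.w i
      ≤ D.s (k - 1) := by
        rw [div_le_iff₀ (D.sum_Ico_w_pos hkm), mul_sum]
        refine sum_le_sum fun i hi => ?_
        obtain ⟨hki, him⟩ := mem_Ico.mp hi
        exact mul_le_mul_of_nonneg_right (D.s_le_s_of_le (by omega) him) (D.w_pos i him).le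
    _ ≤ (∑ i ∈ range k, D.s i * D.w i) / D.muk k := by
        rw [le_div_iff₀ (D.muk_pos hk1 hkm.le), muk, mul_sum]
        refine sum_le_sum fun i hi => ?_
        have hik := mem_range.mp hi
        exact mul_le_mul_of_nonneg_right (D.s_le_s_of_le (by omega) (by omega))
          (D.w_pos i (by omega)).le

/-- Bathtub principle: with `c = s (k - 1)`, every term of the sum in `posSel_sub_posSel`
is nonpositive. -/
theorem posSel_le_posSel_topRule (hk1 : 1 ≤ k) (hkm : k ≤ D.m) (ht : D.IsSelRule t)
    (hsel : D.selRate t = D.muk k) : D.posSel t ≤ D.posSel (topRule k) := by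
  have h := D.posSel_sub_posSel (t' := topRule k) (D.s (k - 1)) (t := t)
  rw [hsel, D.selRate_topRule hkm, sub_self, mul_zero, zero_add] at h
  suffices ∑ i ∈ range D.m, (D.s i - D.s (k - 1)) * D.w i * (t i - topRule k i) ≤ 0 by
    linarith
  refine sum_nonpos fun i hi => ?_
  have him := mem_range.mp hi
  have hw := (D.w_pos i him).le
  obtain ⟨ht0, ht1⟩ := ht i him
  by_cases hik : i < k
  · have hs := D.s_le_s_of_le (Nat.le_sub_one_of_lt hik) (by omega)
    simp only [topRule, if_pos hik]
    exact mul_nonpos_of_nonneg_of_nonpos (mul_nonneg (by linarith) hw) (by linarith)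
  · have hs := D.s_le_s_of_le (show k - 1 ≤ i by omega) him
    simp only [topRule, if_neg hik, sub_zero]
    exact mul_nonpos_of_nonpos_of_nonneg (mul_nonpos_of_nonpos_of_nonneg (by linarith) hw) ht0

theorem feasibleWith_topRule (hk1 : 1 ≤ k) (hkm : k < D.m) :
    D.FeasibleWith (D.muk k) (D.ppv (topRule k)) (D.forr (topRule k)) := by
  have hW := D.one_sub_muk hkm.le ▸ D.sum_Ico_w_pos hkm
  exact ⟨D.muk_pos hk1 hkm.le, by linarith, topRule k, D.isSelRule_topRule,
    D.selRate_topRule hkm.le, rfl, rfl⟩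

theorem forr_topRule_le_pi_and_pi_le_ppv_topRule (hk1 : 1 ≤ k) (hkm : k < D.m) :
    D.forr (topRule k) ≤ D.pi ∧ D.pi ≤ D.ppv (topRule k) := by
  obtain ⟨h0, h1, -⟩ := D.feasibleWith_topRule hk1 hkm
  rw [← D.selRate_topRule hkm.le] at h0 h1
  exact D.forr_le_pi_and_pi_le_ppv h0 h1 (D.forr_topRule_le_ppv_topRule hk1 hkm)

theorem pStar_muk (hk1 : 1 ≤ k) (hkm : k < D.m) :
    D.pStar (D.muk k) = D.ppv (topRule k) := by
  refine IsGreatest.csSup_eq ⟨⟨_, D.feasibleWith_topRule hk1 hkm,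
    D.forr_topRule_le_pi_and_pi_le_ppv_topRule hk1 hkm⟩, ?_⟩
  rintro p ⟨q, ⟨_, _, t, ht, hsel, rfl, -⟩, -⟩
  rw [ppv, ppv, hsel, D.selRate_topRule hkm.le]
  exact div_le_div_of_nonneg_right (D.posSel_le_posSel_topRule hk1 hkm.le ht hsel)
    (D.muk_pos hk1 hkm.le).le

theorem qStar_muk (hk1 : 1 ≤ k) (hkm : k < D.m) :
    D.qStar (D.muk k) = D.forr (topRule k) := by
  refine IsLeast.csInf_eq ⟨⟨_, D.feasibleWith_topRule hk1 hkm,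
    D.forr_topRule_le_pi_and_pi_le_ppv_topRule hk1 hkm⟩, ?_⟩
  rintro q ⟨p, ⟨_, hμ1, t, ht, hsel, -, rfl⟩, -⟩
  rw [forr, forr, hsel, D.selRate_topRule hkm.le]
  exact div_le_div_of_nonneg_right
    (sub_le_sub_left (D.posSel_le_posSel_topRule hk1 hkm.le ht hsel) _) (by linarith)

end CalibScore

/-- For every `k ∈ {1, …, m − 1}`, the minimal false omission rate
at selection rate `μ_k` equals the conditional mean of the bottom scores:
`q_k = q*(μ_k) = (π − μ_k p_k)/(1 − μ_k) = (∑_{i > k} s_i P(S = s_i)) / (∑_{i > k} P(S = s_i))`;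
in particular `q_{m−1} = s_m`.  (1-based indices: the paper's `Σ_{i>k}` is a sum over
the 0-based index range `[k, m)`.) -/
theorem stmt10 (D : CalibScore) (k : ℕ) (hk1 : 1 ≤ k) (hkm : k < D.m) :
    D.qStar (D.muk k) = (D.pi - D.muk k * D.pStar (D.muk k)) / (1 - D.muk k) ∧
    D.qStar (D.muk k) =
      (∑ i ∈ Finset.Ico k D.m, D.s i * D.w i) / (∑ i ∈ Finset.Ico k D.m, D.w i) ∧
    (k = D.m - 1 → D.qStar (D.muk k) = D.s (D.m - 1)) := by
  have hq := D.qStar_muk hk1 hkm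
  have hsel := D.selRate_topRule hkm.le
  refine ⟨?_, hq.trans (D.forr_topRule hkm.le), fun hk => ?_⟩
  · rw [hq, D.pStar_muk hk1 hkm, D.forr_eq_pi_sub_selRate_mul_ppv
      (hsel ▸ (D.muk_pos hk1 hkm.le).ne'), hsel]
  · rw [hq, D.forr_topRule hkm.le, hk, Nat.Ico_pred_singleton (by omega), sum_singleton,
      sum_singleton, mul_div_cancel_right₀ _ (D.w_pos _ (by omega)).ne']
end
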